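/- arXiv:1801.09981 — 5 statements merged into one kernel-verified Lean document; each statement's English description precedes it below -/
import Mathlib

section
/- Let G be a finite simple graph and let s be an integer with 1 ≤ s ≤ ω(G) (so that N_s(G) > 0). Then G contains a path with at least (s+1)·N_{s+1}(G)/N_s(G) + s - 1 edges; equivalently, there is a path in G of length l (number of edges) satisfying N_s(G)·(l - s + 1) ≥ (s+1)·N_{s+1}(G). -/
/-!
Write `L` for the length of a longest path and `s = n + 1`. We show
`(s + 1) N_{s+1}(A) ≤ N_s(A) (L - s + 1)` for every vertex set `A` by induction on `A`.
If some vertex `v` satisfies this inequality for the cliques through it, delete `v`. Otherwise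
every `v` has `(s + 1) N_s(B) > N_{s-1}(B) (L - s + 1)` on its neighbourhood `B`, and the
double-counting bound `s N_s(B) ≤ (|B| - s + 1) N_{s-1}(B)` turns this into `2 |B| > L`. Then a
longest path in `A` closes up into a cycle (Pósa), so its vertex set `S` is cut off from the
rest of `A`; the double-counting bound on `S`, where `|S| ≤ L + 1`, and induction on `A \ S`
finish the proof.
-/

/-- `cliqueCount G j` is `N_j(G)`, the number of `j`-vertex cliques (copies of `K_j`) in `G`. -/
noncomputable def cliqueCount {V : Type*} (G : SimpleGraph V) (j : ℕ) : ℕ :=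
  Set.ncard {s : Finset V | G.IsNClique j s}

open Finset

namespace SimpleGraph.Walk

variable {V : Type*} {G : SimpleGraph V} {u v : V}

structure IsLongestPathIn (A : Set V) (p : G.Walk u v) : Prop where
  isPath : p.IsPath
  support_subset : ∀ x ∈ p.support, x ∈ A
  length_le : ∀ (a b : V) (q : G.Walk a b), q.IsPath → (∀ x ∈ q.support, x ∈ A) →
    q.length ≤ p.length

theorem exists_isLongestPathIn {A : Set V} (hA : A.Finite) (hne : A.Nonempty) :
    ∃ (u v : V) (p : G.Walk u v), p.IsLongestPathIn A := by
  classical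
  let lengths := {n | ∃ (u v : V) (p : G.Walk u v), p.IsPath ∧ (∀ x ∈ p.support, x ∈ A) ∧
    p.length = n}
  have hfin : lengths.Finite := (Set.finite_le_nat hA.toFinset.card).subset <| by
    rintro _ ⟨u, v, p, hp, hpA, rfl⟩
    have : p.support.toFinset ⊆ hA.toFinset := fun x hx ↦ by simpa using hpA x (by simpa using hx)
    have := card_le_card this
    rw [List.toFinset_card_of_nodup hp.support_nodup, Walk.length_support] at this
    exact Nat.le_of_succ_le this
  obtain ⟨x, hx⟩ := hne
  obtain ⟨_, ⟨u, v, p, hp, hpA, rfl⟩, hmax⟩ :=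
    hfin.exists_maximal ⟨0, x, x, nil, by simp, by simpa using hx, rfl⟩
  exact ⟨u, v, p, ⟨hp, hpA, fun a b q hq hqA ↦
    (le_total _ _).elim id (hmax ⟨a, b, q, hq, hqA, rfl⟩)⟩⟩

namespace IsLongestPathIn

variable {A : Set V} {p : G.Walk u v}

theorem reverse (hp : p.IsLongestPathIn A) : p.reverse.IsLongestPathIn A :=
  ⟨hp.isPath.reverse, by simpa using hp.support_subset, by simpa using hp.length_le⟩

theorem mem_support_of_adj_start (hp : p.IsLongestPathIn A) {w : V} (hw : w ∈ A)
    (hadj : G.Adj u w) : w ∈ p.support := by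
  by_contra hwp
  have := hp.length_le w v (cons hadj.symm p) (hp.isPath.cons hwp) (by simpa [hw] using hp.support_subset)
  simp at this

theorem mem_support_of_adj_end (hp : p.IsLongestPathIn A) {w : V} (hw : w ∈ A)
    (hadj : G.Adj v w) : w ∈ p.support := by
  simpa using hp.reverse.mem_support_of_adj_start hw hadj

end IsLongestPathIn

theorem two_le_length_of_mem_support {p : G.Walk u v} {c : V} (hc : c ∈ p.support)
    (hcu : c ≠ u) (hcv : c ≠ v) : 2 ≤ p.length := by
  rcases p with _ | ⟨h, _ | ⟨h', q⟩⟩ <;> simp_all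

theorem exists_isCycle_of_adj_of_adj {x d : V} (q : G.Walk u x) (hxd : G.Adj x d)
    (r : G.Walk d v) (hp : (q.append (cons hxd r)).IsPath)
    (hlen : 2 ≤ (q.append (cons hxd r)).length) (hud : G.Adj u d) (hxv : G.Adj x v) :
    ∃ C : G.Walk u u, C.IsCycle ∧ C.length = (q.append (cons hxd r)).length + 1 ∧
      ∀ y, y ∈ C.support ↔ y ∈ (q.append (cons hxd r)).support := by
  have hsupp : (q.append (cons hxd r)).support = q.support ++ r.support := by
    rw [support_append, support_cons, List.tail_cons]
  rw [isPath_def, hsupp, List.nodup_append'] at hp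
  obtain ⟨hq, hr, hdisj⟩ := hp
  have hur : u ∉ r.support := fun h ↦ hdisj q.start_mem_support h
  have hvq : v ∉ q.reverse.support := by simpa using fun h ↦ hdisj h r.end_mem_support
  -- the cycle `u → d ⇝ v → x ⇝ u`
  refine ⟨(cons hud r).append (cons hxv.symm q.reverse), ?_, ?_, fun y ↦ ?_⟩
  · refine (IsPath.mk' hr).cons hur |>.isCycle_append ((IsPath.mk' hq).reverse.cons hvq) ?_ ?_
    · simpa using hdisj.symm
    · simp only [length_append, length_cons, length_reverse] at hlen ⊢
      omega
  · simp only [length_append, length_cons, length_reverse]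
    omega
  · simp only [hsupp, support_append, support_cons, List.tail_cons, support_reverse,
      List.mem_cons, List.mem_append, List.mem_reverse]
    have := q.start_mem_support
    grind

theorem IsCycle.exists_isPath_of_adj {C : G.Walk u u} (hC : C.IsCycle) {c w : V}
    (hc : c ∈ C.support) (hw : w ∉ C.support) (hwc : G.Adj w c) :
    ∃ (d : V) (q : G.Walk w d), q.IsPath ∧ q.length = C.length ∧
      ∀ y ∈ q.support, y = w ∨ y ∈ C.support := by
  classical
  set D := C.rotate c hc
  have hD : D.IsCycle := hC.rotate hc
  have hmem : ∀ y, y ∈ D.tail.support → y ∈ C.support := fun y hy ↦ by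
    rw [support_tail_of_not_nil _ hD.not_nil] at hy
    exact (mem_support_rotate_iff C c hc).mp (List.mem_of_mem_tail hy)
  have hwD : w ∉ D.tail.reverse.support := by
    rw [support_reverse, List.mem_reverse]
    exact mt (hmem w) hw
  refine ⟨_, cons hwc D.tail.reverse, hD.isPath_tail.reverse.cons hwD, ?_, fun y hy ↦ ?_⟩
  · rw [length_cons, length_reverse, length_tail_add_one hD.not_nil, length_rotate]
  · rw [support_cons, List.mem_cons, support_reverse, List.mem_reverse] at hy
    exact hy.imp_right (hmem y)

theorem exists_mem_darts_adj_adj (p : G.Walk u v) {Nu Nv : Finset V}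
    (hNu : ∀ x ∈ Nu, G.Adj u x ∧ x ∈ p.support) (hNv : ∀ x ∈ Nv, G.Adj x v ∧ x ∈ p.support)
    (hcard : p.length < #Nu + #Nv) :
    ∃ δ ∈ p.darts, G.Adj u δ.snd ∧ G.Adj δ.fst v := by
  classical
  set D := p.darts.toFinset
  have hsnd : Nu ⊆ {δ ∈ D | G.Adj u δ.snd}.image (·.snd) := fun x hx ↦ by
    obtain ⟨hadj, hxp⟩ := hNu x hx
    rw [← cons_map_snd_darts, List.mem_cons] at hxp
    obtain ⟨δ, hδ, rfl⟩ := List.mem_map.mp (hxp.resolve_left hadj.ne')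
    exact mem_image_of_mem _ (mem_filter.mpr ⟨List.mem_toFinset.mpr hδ, hadj⟩)
  have hfst : Nv ⊆ {δ ∈ D | G.Adj δ.fst v}.image (·.fst) := fun x hx ↦ by
    obtain ⟨hadj, hxp⟩ := hNv x hx
    rw [← map_fst_darts_append, List.mem_append, List.mem_singleton] at hxp
    obtain ⟨δ, hδ, rfl⟩ := List.mem_map.mp (hxp.resolve_right hadj.ne)
    exact mem_image_of_mem _ (mem_filter.mpr ⟨List.mem_toFinset.mpr hδ, hadj⟩)
  have hlt : #D < #{δ ∈ D | G.Adj u δ.snd} + #{δ ∈ D | G.Adj δ.fst v} :=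
    calc #D ≤ p.length := (List.toFinset_card_le _).trans_eq (length_darts p)
      _ < #Nu + #Nv := hcard
      _ ≤ _ := add_le_add ((card_le_card hsnd).trans card_image_le)
          ((card_le_card hfst).trans card_image_le)
  obtain ⟨δ, hδ⟩ := inter_nonempty_of_card_lt_card_add_card (filter_subset _ _)
    (filter_subset _ _) hlt
  simp only [mem_inter, mem_filter, D, List.mem_toFinset] at hδ
  exact ⟨δ, hδ.1.1, hδ.1.2, hδ.2.2⟩

/-- Pósa: the degree condition yields a crossing dart, which closes the path into a cycle on the
same vertices; a neighbour off the path would open that cycle into a longer path. -/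
theorem IsLongestPathIn.not_adj [DecidableRel G.Adj] {A : Finset V} {p : G.Walk u v}
    (hp : p.IsLongestPathIn A) (hdeg : p.length < #{x ∈ A | G.Adj u x} + #{x ∈ A | G.Adj v x})
    {w c : V} (hw : w ∈ A) (hwp : w ∉ p.support) (hc : c ∈ p.support) : ¬ G.Adj w c := by
  intro hwc
  obtain rfl | hcu := eq_or_ne c u
  · exact hwp (hp.mem_support_of_adj_start hw hwc.symm)
  obtain rfl | hcv := eq_or_ne c v
  · exact hwp (hp.mem_support_of_adj_end hw hwc.symm)
  obtain ⟨δ, hδ, hu, hv⟩ := p.exists_mem_darts_adj_adj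
    (fun x hx ↦ have hx := mem_filter.mp hx; ⟨hx.2, hp.mem_support_of_adj_start hx.1 hx.2⟩)
    (fun x hx ↦ have hx := mem_filter.mp hx; ⟨hx.2.symm, hp.mem_support_of_adj_end hx.1 hx.2⟩)
    hdeg
  obtain ⟨q, r, hqr⟩ := (isSubwalk_toWalk_adj_iff_mem_darts p).mpr hδ
  rw [← append_assoc, Adj.toWalk, cons_append, nil_append] at hqr
  subst hqr
  obtain ⟨C, hC, hClen, hCsupp⟩ := exists_isCycle_of_adj_of_adj q δ.adj r hp.isPath
    (two_le_length_of_mem_support hc hcu hcv) hu hv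
  obtain ⟨d, q', hq', hq'len, hq'supp⟩ :=
    hC.exists_isPath_of_adj ((hCsupp c).mpr hc) (mt (hCsupp w).mp hwp) hwc
  have := hp.length_le w d q' hq' fun y hy ↦
    (hq'supp y hy).elim (· ▸ hw) fun hy ↦ hp.support_subset y ((hCsupp y).mp hy)
  omega

end SimpleGraph.Walk

namespace SimpleGraph

variable {V : Type*} (G : SimpleGraph V)

open scoped Classical in
noncomputable def cliquesIn (A : Finset V) (n : ℕ) : Finset (Finset V) :=
  {s ∈ A.powerset | G.IsNClique n s}

variable {G}

@[simp]
theorem mem_cliquesIn {A s : Finset V} {n : ℕ} :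
    s ∈ G.cliquesIn A n ↔ s ⊆ A ∧ G.IsNClique n s := by
  simp [cliquesIn]

theorem cliqueCount_eq_card_cliquesIn [Fintype V] (n : ℕ) :
    cliqueCount G n = #(G.cliquesIn univ n) := by
  rw [cliqueCount, ← Set.ncard_coe_finset]
  congr
  ext s
  simp

variable [DecidableEq V]

theorem card_cliquesIn_eq_card_erase_add_card_neighbours [DecidableRel G.Adj] {A : Finset V}
    {v : V} (hv : v ∈ A) (n : ℕ) :
    #(G.cliquesIn A (n + 1)) = #(G.cliquesIn (A.erase v) (n + 1)) +
      #(G.cliquesIn {x ∈ A | G.Adj v x} n) := by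
  rw [← card_filter_add_card_filter_not (s := G.cliquesIn A (n + 1)) (v ∉ ·)]
  congr 1
  · congr 1
    ext s
    simp only [mem_filter, mem_cliquesIn, subset_erase]
    tauto
  have hnv : ∀ t ⊆ {x ∈ A | G.Adj v x}, v ∉ t := fun t ht hvt ↦ G.irrefl (mem_filter.mp (ht hvt)).2
  refine card_nbij' (·.erase v) (insert v) (fun s hs ↦ ?_) (fun t ht ↦ ?_) (fun s hs ↦ ?_)
    (fun t ht ↦ ?_)
  · simp only [mem_coe, mem_filter, mem_cliquesIn, not_not] at hs ⊢
    refine ⟨fun x hx ↦ ?_, hs.1.2.erase_of_mem hs.2⟩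
    obtain ⟨hxv, hxs⟩ := mem_erase.mp hx
    exact mem_filter.mpr ⟨hs.1.1 hxs, hs.1.2.isClique hs.2 hxs hxv.symm⟩
  · simp only [mem_coe, mem_filter, mem_cliquesIn, not_not] at ht ⊢
    refine ⟨⟨insert_subset hv (ht.1.trans (filter_subset _ _)), ht.2.insert fun x hx ↦ ?_⟩,
      mem_insert_self v t⟩
    exact (mem_filter.mp (ht.1 hx)).2
  · simp only [mem_coe, mem_filter, not_not] at hs
    exact insert_erase hs.2
  · exact erase_insert (hnv t (mem_cliquesIn.mp ht).1)

theorem card_cliquesIn_eq_add_card_sdiff {A S : Finset V} (hSA : S ⊆ A)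
    (hsep : ∀ x ∈ S, ∀ y ∈ A \ S, ¬ G.Adj x y) {n : ℕ} (hn : n ≠ 0) :
    #(G.cliquesIn A n) = #(G.cliquesIn S n) + #(G.cliquesIn (A \ S) n) := by
  rw [← card_filter_add_card_filter_not (s := G.cliquesIn A n) (· ⊆ S)]
  congr 2 <;> ext s <;> simp only [mem_filter, mem_cliquesIn]
  · exact ⟨fun h ↦ ⟨h.2, h.1.2⟩, fun h ↦ ⟨⟨h.1.trans hSA, h.2⟩, h.1⟩⟩
  constructor
  · rintro ⟨⟨hsA, hs⟩, hsS⟩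
    obtain ⟨y, hys, hyS⟩ := not_subset.mp hsS
    refine ⟨fun x hxs ↦ mem_sdiff.mpr ⟨hsA hxs, fun hxS ↦ ?_⟩, hs⟩
    exact hsep x hxS y (mem_sdiff.mpr ⟨hsA hys, hyS⟩)
      (hs.isClique hxs hys (ne_of_mem_of_not_mem hxS hyS))
  · rintro ⟨hsAS, hs⟩
    obtain ⟨x, hx⟩ := card_pos.mp (hs.card_eq ▸ Nat.pos_of_ne_zero hn)
    exact ⟨⟨hsAS.trans sdiff_subset, hs⟩, fun hsS ↦ (mem_sdiff.mp (hsAS hx)).2 (hsS hx)⟩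

theorem succ_mul_card_cliquesIn_succ_le (B : Finset V) (n : ℕ) :
    (n + 1) * #(G.cliquesIn B (n + 1)) ≤ (#B - n) * #(G.cliquesIn B n) := by
  rw [mul_comm, mul_comm (#B - n)]
  refine card_mul_le_card_mul (fun s t ↦ t ⊆ s) (fun s hs ↦ ?_) (fun t ht ↦ ?_)
  · have hsub : s.powersetCard n ⊆ (G.cliquesIn B n).bipartiteAbove (fun s t ↦ t ⊆ s) s :=
      fun t ht ↦ by
        obtain ⟨hts, htcard⟩ := mem_powersetCard.mp ht
        obtain ⟨hsB, hs⟩ := mem_cliquesIn.mp hs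
        exact (mem_bipartiteAbove _).mpr ⟨mem_cliquesIn.mpr ⟨hts.trans hsB,
          ⟨hs.isClique.subset (by exact_mod_cast hts), htcard⟩⟩, hts⟩
    calc n + 1 = #(s.powersetCard n) := by
          rw [card_powersetCard, (mem_cliquesIn.mp hs).2.card_eq, Nat.choose_succ_self_right]
      _ ≤ _ := card_le_card hsub
  · obtain ⟨htB, ht⟩ := mem_cliquesIn.mp ht
    have hsub : (G.cliquesIn B (n + 1)).bipartiteBelow (fun s t ↦ t ⊆ s) t ⊆
        (B \ t).image (insert · t) := fun s hs ↦ by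
      obtain ⟨hs, hts⟩ := (mem_bipartiteBelow _).mp hs
      obtain ⟨hsB, hs⟩ := mem_cliquesIn.mp hs
      obtain ⟨x, hxt, rfl⟩ := exists_eq_insert_iff.mpr ⟨hts, by rw [ht.card_eq, hs.card_eq]⟩
      exact mem_image_of_mem _ (mem_sdiff.mpr ⟨hsB (mem_insert_self x t), hxt⟩)
    calc _ ≤ #(B \ t) := (card_le_card hsub).trans card_image_le
      _ = #B - n := by rw [card_sdiff_of_subset htB, ht.card_eq]

theorem succ_mul_card_cliquesIn_succ_le_int (B : Finset V) (n : ℕ) :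
    ((n : ℤ) + 1) * #(G.cliquesIn B (n + 1)) ≤ ((#B : ℤ) - n) * #(G.cliquesIn B n) := by
  have h := succ_mul_card_cliquesIn_succ_le (G := G) B n
  rcases le_or_gt n #B with hnB | hnB
  · zify [hnB] at h
    linarith
  have hempty : G.cliquesIn B n = ∅ := eq_empty_of_forall_notMem fun s hs ↦ by
    have := card_le_card (mem_cliquesIn.mp hs).1
    rw [(mem_cliquesIn.mp hs).2.card_eq] at this
    omega
  rw [Nat.sub_eq_zero_of_le hnB.le, zero_mul, Nat.le_zero, Nat.mul_eq_zero] at h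
  simp [hempty, h.resolve_left n.succ_ne_zero]

theorem add_one_le_two_mul_card_of_lt {B : Finset V} {n : ℕ} {L : ℤ}
    (h : #(G.cliquesIn B n) * (L - n) < (n + 2) * #(G.cliquesIn B (n + 1))) :
    L + 1 ≤ 2 * #B := by
  have hlym := succ_mul_card_cliquesIn_succ_le_int (G := G) B n
  by_contra! hB
  nlinarith

theorem card_cliquesIn_mul_le_of_separated (L n : ℕ) {A S : Finset V} (hSA : S ⊆ A)
    (hsep : ∀ x ∈ S, ∀ y ∈ A \ S, ¬ G.Adj x y) (hS : #S ≤ L + 1)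
    (hrest : ((n : ℤ) + 2) * #(G.cliquesIn (A \ S) (n + 2)) ≤
      #(G.cliquesIn (A \ S) (n + 1)) * ((L : ℤ) - n)) :
    ((n : ℤ) + 2) * #(G.cliquesIn A (n + 2)) ≤ #(G.cliquesIn A (n + 1)) * ((L : ℤ) - n) := by
  rw [card_cliquesIn_eq_add_card_sdiff hSA hsep n.succ_ne_zero,
    card_cliquesIn_eq_add_card_sdiff hSA hsep (n + 1).succ_ne_zero]
  have hlym := succ_mul_card_cliquesIn_succ_le_int (G := G) S (n + 1)
  have hS' : ((#S : ℤ) - (n + 1 : ℕ)) * #(G.cliquesIn S (n + 1)) ≤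
      ((L : ℤ) - n) * #(G.cliquesIn S (n + 1)) :=
    mul_le_mul_of_nonneg_right (by omega) (by positivity)
  push_cast at hlym hS' ⊢
  linarith

theorem card_cliquesIn_mul_le [DecidableRel G.Adj] (L n : ℕ) (A : Finset V)
    (hL : ∀ (u v : V) (p : G.Walk u v), p.IsPath → (∀ x ∈ p.support, x ∈ A) → p.length ≤ L) :
    ((n : ℤ) + 2) * #(G.cliquesIn A (n + 2)) ≤ #(G.cliquesIn A (n + 1)) * ((L : ℤ) - n) := by
  induction A using Finset.strongInduction with
  | H A ih =>
  have ih' : ∀ B ⊂ A, ((n : ℤ) + 2) * #(G.cliquesIn B (n + 2)) ≤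
      #(G.cliquesIn B (n + 1)) * ((L : ℤ) - n) := fun B hB ↦
    ih B hB fun u v p hp hpB ↦ hL u v p hp fun x hx ↦ hB.subset (hpB x hx)
  by_cases hdel : ∃ v ∈ A, ((n : ℤ) + 2) * #(G.cliquesIn {x ∈ A | G.Adj v x} (n + 1)) ≤
      #(G.cliquesIn {x ∈ A | G.Adj v x} n) * ((L : ℤ) - n)
  · obtain ⟨v, hv, hvle⟩ := hdel
    have h₁ := card_cliquesIn_eq_card_erase_add_card_neighbours (G := G) hv n
    have h₂ := card_cliquesIn_eq_card_erase_add_card_neighbours (G := G) hv (n + 1)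
    have := ih' _ (erase_ssubset hv)
    rw [h₁, h₂]
    push_cast
    linarith
  push Not at hdel
  rcases A.eq_empty_or_nonempty with rfl | hA
  · simp [cliquesIn, filter_singleton]
  obtain ⟨u, v, p, hp⟩ := Walk.exists_isLongestPathIn (G := G) A.finite_toSet hA
  have hpL := hL u v p hp.isPath hp.support_subset
  have hdeg : p.length < #{x ∈ A | G.Adj u x} + #{x ∈ A | G.Adj v x} := by
    have hu := add_one_le_two_mul_card_of_lt (hdel u (hp.support_subset u p.start_mem_support))
    have hv := add_one_le_two_mul_card_of_lt (hdel v (hp.support_subset v p.end_mem_support))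
    omega
  have hSA : p.support.toFinset ⊆ A := fun x hx ↦ hp.support_subset x (List.mem_toFinset.mp hx)
  refine card_cliquesIn_mul_le_of_separated L n hSA (fun x hx y hy hxy ↦ ?_) ?_
    (ih' _ (sdiff_ssubset hSA ⟨u, List.mem_toFinset.mpr p.start_mem_support⟩))
  · obtain ⟨hyA, hyS⟩ := mem_sdiff.mp hy
    exact hp.not_adj hdeg hyA (mt List.mem_toFinset.mpr hyS) (List.mem_toFinset.mp hx) hxy.symm
  · rw [List.toFinset_card_of_nodup hp.isPath.support_nodup, Walk.length_support]
    omega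

end SimpleGraph

/-- For `1 ≤ s ≤ ω(G)`, the graph `G` contains a path of length `l` (number of edges)
satisfying `N_s(G) · (l - s + 1) ≥ (s+1) · N_{s+1}(G)`, i.e. a path with at least
`(s+1)·N_{s+1}(G)/N_s(G) + s - 1` edges. -/
theorem path_of_cliqueCounts {V : Type*} [Fintype V] (G : SimpleGraph V) (s : ℕ)
    (hs1 : 1 ≤ s) (hsω : s ≤ G.cliqueNum) :
    ∃ (u v : V) (p : G.Walk u v), p.IsPath ∧
      ((s + 1 : ℤ) * cliqueCount G (s + 1) ≤
        (cliqueCount G s : ℤ) * ((p.length : ℤ) - s + 1)) := by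
  classical
  obtain ⟨n, rfl⟩ : ∃ n, s = n + 1 := ⟨s - 1, by omega⟩
  obtain ⟨K, hK⟩ := G.exists_isNClique_cliqueNum
  obtain ⟨x, -⟩ := card_pos.mp (hK.card_eq ▸ hs1.trans hsω)
  obtain ⟨u, v, p, hp⟩ := SimpleGraph.Walk.exists_isLongestPathIn (G := G)
    (univ : Finset V).finite_toSet ⟨x, mem_univ x⟩
  refine ⟨u, v, p, hp.isPath, ?_⟩
  have key := G.card_cliquesIn_mul_le p.length n univ hp.length_le
  rw [G.cliqueCount_eq_card_cliquesIn, G.cliqueCount_eq_card_cliquesIn]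
  push_cast
  linarith
end

section
/- Let G be a simple graph on n vertices containing no path with l vertices, where l ≥ 2. Then for every integer k with 2 ≤ k ≤ ω(G), the clique counts of G satisfy k·N_k(G) ≤ (l-k)·N_{k-1}(G). -/
/-!
By induction on a vertex set `S`, prove `k N_k(S) ≤ (l - k) N_{k-1}(S)` for the cliques inside `S`.
The `k`-cliques through `v ∈ S` are `v` added to the `(k-1)`-cliques of its neighbourhood `X` in
`S`, so if `k N_{k-1}(X) ≤ (l - k) N_{k-2}(X)` for some `v`, delete `v`. Otherwise, at every `v`
the failure of this together with the double-counting bound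
`(j + 1) N_{j+1}(X) ≤ (|X| - j) N_j(X)` forces `|X| ≥ (l - 1) / 2`. As in Dirac's theorem, the
ends of a longest path in `S` then have crossing neighbours on it, so its vertices carry a cycle,
and maximality makes them a union of components of `G[S]` with fewer than `l` vertices. On such a
component `W` the double-counting bound is already the claim, and we recurse on `S \ W`.
-/

open Finset

theorem List.exists_eq_append_cons_cons_of_length_le {α : Type*} [DecidableEq α] (x : α)
    (q : List α) (A B : Finset α) (hA : ∀ b ∈ A, b ∈ q)
    (hB : ∀ a ∈ B, a ∈ (x :: q).dropLast)
    (hlen : q.length + 1 ≤ #A + #B) :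
    ∃ L a b R, x :: q = L ++ a :: b :: R ∧ a ∈ B ∧ b ∈ A := by
  induction q generalizing x A B with
  | nil =>
    have hA : A = ∅ := eq_empty_of_forall_notMem fun b hb => by simpa using hA b hb
    have hB : B = ∅ := eq_empty_of_forall_notMem fun a ha => by simpa using hB a ha
    simp [hA, hB] at hlen
  | cons y q ih =>
    by_cases hxy : x ∈ B ∧ y ∈ A
    · exact ⟨[], x, y, q, rfl, hxy⟩
    have hA' : ∀ b ∈ A.erase y, b ∈ q := fun b hb => by
      obtain ⟨hby, hbA⟩ := mem_erase.1 hb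
      simpa [hby] using hA b hbA
    have hB' : ∀ a ∈ B.erase x, a ∈ (y :: q).dropLast := fun a ha => by
      obtain ⟨hax, haB⟩ := mem_erase.1 ha
      simpa [hax] using hB a haB
    have hcard : q.length + 1 ≤ #(A.erase y) + #(B.erase x) := by
      have := pred_card_le_card_erase (s := A) (a := y)
      have := pred_card_le_card_erase (s := B) (a := x)
      simp only [List.length_cons] at hlen
      by_cases hx : x ∈ B
      · rw [erase_eq_of_notMem (by tauto : y ∉ A)]; omega
      · rw [erase_eq_of_notMem hx]; omega
    obtain ⟨L, a, b, R, hsplit, haB, hbA⟩ := ih y _ _ hA' hB' hcard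
    exact ⟨x :: L, a, b, R, by rw [hsplit]; rfl, Finset.mem_of_mem_erase haB,
      Finset.mem_of_mem_erase hbA⟩

theorem List.IsChain.exists_cons_perm_of_closed {α : Type*} {r : α → α → Prop} {C : List α}
    (hC : C.IsChain r) (hclosed : ∀ a ∈ C.getLast?, ∀ b ∈ C.head?, r a b) {z : α}
    (hz : z ∈ C) :
    ∃ W, (z :: W).Perm C ∧ (z :: W).IsChain r := by
  obtain ⟨U, W, rfl⟩ := List.append_of_mem hz
  obtain ⟨hU, hzW, -⟩ := List.isChain_append.1 hC
  refine ⟨W ++ U, List.perm_append_comm (l₁ := z :: W),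
    List.isChain_append.2 ⟨hzW, hU, ?_⟩⟩
  intro a ha b hb
  exact hclosed a (by simp_all [List.getLast?_append]) b (by simp_all [List.head?_append])

namespace SimpleGraph

variable {V : Type*} {G : SimpleGraph V}

section CliqueCount

variable [DecidableEq V] [DecidableRel G.Adj]

variable (G) in
def cliqueCountIn (j : ℕ) (S : Finset V) : ℕ := #{s ∈ S.powerset | G.IsNClique j s}

theorem cliqueCountIn_univ [Fintype V] (j : ℕ) : G.cliqueCountIn j univ = cliqueCount G j := by
  rw [cliqueCount, cliqueCountIn, ← Set.ncard_coe_finset]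
  congr
  ext s
  simp

theorem succ_mul_cliqueCountIn_succ_le (j : ℕ) (S : Finset V) :
    (j + 1) * G.cliqueCountIn (j + 1) S ≤ (#S - j) * G.cliqueCountIn j S := by
  rw [cliqueCountIn, cliqueCountIn, mul_comm, mul_comm (#S - j)]
  refine card_mul_le_card_mul (fun A B => B ⊆ A) (fun A hA => ?_) (fun B hB => ?_)
  · simp only [mem_filter, mem_powerset] at hA
    calc j + 1 = #(A.powersetCard j) := by
          rw [card_powersetCard, hA.2.card_eq, Nat.choose_succ_self_right]
      _ ≤ _ := card_le_card fun B hB => by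
          rw [mem_powersetCard] at hB
          simp only [mem_bipartiteAbove, mem_filter, mem_powerset]
          exact ⟨⟨hB.1.trans hA.1, hA.2.isClique.subset (by exact_mod_cast hB.1), hB.2⟩,
            hB.1⟩
  · simp only [mem_filter, mem_powerset] at hB
    calc _ ≤ #((S \ B).image (insert · B)) := card_le_card fun A hA => by
          simp only [mem_bipartiteBelow, mem_filter, mem_powerset] at hA
          obtain ⟨a, haB, rfl⟩ := exists_eq_insert_iff.2
            ⟨hA.2, by rw [hA.1.2.card_eq, hB.2.card_eq]⟩
          exact mem_image_of_mem _ (mem_sdiff.2 ⟨hA.1.1 (mem_insert_self a B), haB⟩)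
      _ ≤ #S - j := by rw [← hB.2.card_eq, ← card_sdiff_of_subset hB.1]; exact card_image_le

theorem sub_one_le_two_mul_card_of_lt_mul_cliqueCountIn {j l : ℕ} {X : Finset V}
    (hX : (l - (j + 2)) * G.cliqueCountIn j X < (j + 2) * G.cliqueCountIn (j + 1) X) :
    l - 1 ≤ 2 * #X := by
  have hL1 := succ_mul_cliqueCountIn_succ_le (G := G) j X
  generalize G.cliqueCountIn j X = a, G.cliqueCountIn (j + 1) X = b, #X = d at hX hL1
  by_contra! h
  rcases lt_or_ge d j with hdj | hjd
  · simp [Nat.sub_eq_zero_of_le hdj.le] at hL1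
    simp [hL1] at hX
  obtain ⟨e, rfl⟩ := Nat.exists_eq_add_of_le hjd
  obtain ⟨f, rfl⟩ := Nat.exists_eq_add_of_le (show 2 * (j + e) + 2 ≤ l by omega)
  rw [show 2 * (j + e) + 2 + f - (j + 2) = j + 2 * e + f by omega] at hX
  rw [Nat.add_sub_cancel_left] at hL1
  nlinarith

theorem cliqueCountIn_succ_eq_erase_add {j : ℕ} {S : Finset V} {v : V} (hv : v ∈ S) :
    G.cliqueCountIn (j + 1) S =
      G.cliqueCountIn (j + 1) (S.erase v) + G.cliqueCountIn j {w ∈ S | G.Adj v w} := by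
  rw [cliqueCountIn, ← card_filter_add_card_filter_not (fun s => v ∉ s), filter_filter,
    filter_filter]
  congr 1
  · congr 1
    ext s
    simp only [mem_filter, mem_powerset, subset_erase]
    tauto
  · symm
    apply card_nbij' (insert v) (·.erase v)
    · intro t ht
      simp only [coe_filter, mem_powerset, Set.mem_ofPred_eq, subset_iff, mem_filter] at ht ⊢
      refine ⟨?_, ht.2.insert fun w hw => (ht.1 hw).2, by simp⟩
      simp only [mem_insert, forall_eq_or_imp]
      exact ⟨hv, fun w hw => (ht.1 hw).1⟩
    · intro s hs
      simp only [coe_filter, mem_powerset, Set.mem_ofPred_eq, subset_iff, mem_filter,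
        not_not] at hs ⊢
      obtain ⟨hsS, hs, hvs⟩ := hs
      refine ⟨fun w hw => ?_, by simpa using hs.erase_of_mem hvs⟩
      rw [mem_erase] at hw
      exact ⟨hsS hw.2, hs.isClique hvs hw.2 hw.1.symm⟩
    · intro t ht
      simp only [coe_filter] at ht
      exact erase_insert fun hvt => G.irrefl (mem_filter.1 (mem_powerset.1 ht.1 hvt)).2
    · intro s hs
      simp only [coe_filter, not_not] at hs
      exact insert_erase hs.2.2

theorem cliqueCountIn_eq_add_sdiff {j : ℕ} (hj : j ≠ 0) {S W : Finset V} (hWS : W ⊆ S)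
    (hW : ∀ y ∈ S \ W, ∀ z ∈ W, ¬ G.Adj y z) :
    G.cliqueCountIn j S = G.cliqueCountIn j W + G.cliqueCountIn j (S \ W) := by
  rw [cliqueCountIn, ← card_filter_add_card_filter_not (fun s => s ⊆ W), filter_filter,
    filter_filter]
  congr 2 <;> ext s <;> simp only [mem_filter, mem_powerset]
  · exact ⟨fun ⟨_, hs, hsW⟩ => ⟨hsW, hs⟩,
      fun ⟨hsW, hs⟩ => ⟨hsW.trans hWS, hs, hsW⟩⟩
  constructor
  · rintro ⟨hsS, hs, hsW⟩
    refine ⟨fun x hx => mem_sdiff.2 ⟨hsS hx, fun hxW => ?_⟩, hs⟩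
    obtain ⟨y, hys, hyW⟩ := not_subset.1 hsW
    exact hW y (mem_sdiff.2 ⟨hsS hys, hyW⟩) x hxW
      (hs.isClique hys hx (ne_of_mem_of_not_mem hxW hyW).symm)
  · rintro ⟨hsSW, hs⟩
    obtain ⟨x, hx⟩ := card_ne_zero.1 (hs.card_eq ▸ hj)
    exact ⟨hsSW.trans sdiff_subset, hs, fun hsW => (mem_sdiff.1 (hsSW hx)).2 (hsW hx)⟩

end CliqueCount

section Paths

theorem length_lt_of_not_exists_isPath {l : ℕ} (hl : l ≠ 0)
    (hG : ¬ ∃ (u v : V) (p : G.Walk u v), p.IsPath ∧ p.length + 1 = l)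
    {q : List V} (hq : q.IsChain G.Adj) (hnd : q.Nodup) : q.length < l := by
  by_contra! h
  have hne : q.take l ≠ [] := List.ne_nil_of_length_pos (by simp only [List.length_take]; omega)
  refine hG ⟨_, _, Walk.ofSupport _ hne (hq.take l), ?_, ?_⟩
  · rw [Walk.isPath_def, Walk.support_ofSupport]
    exact hnd.sublist (List.take_sublist _ _)
  · simp only [Walk.length_ofSupport, List.length_take]
    omega

theorem IsClique.card_lt_of_forall_length_lt {l : ℕ}
    (hpath : ∀ q : List V, q.IsChain G.Adj → q.Nodup → q.length < l) {t : Finset V}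
    (ht : G.IsClique (t : Set V)) : #t < l := by
  rw [← length_toList]
  refine hpath _ (t.nodup_toList.pairwise_of_forall_ne fun a ha b hb hab => ?_).isChain
    t.nodup_toList
  exact ht (mem_toList.1 ha) (mem_toList.1 hb) hab

def IsPathIn (G : SimpleGraph V) (S : Finset V) (q : List V) : Prop :=
  q.IsChain G.Adj ∧ q.Nodup ∧ ∀ x ∈ q, x ∈ S

theorem IsPathIn.reverse {S : Finset V} {q : List V} (hq : G.IsPathIn S q) :
    G.IsPathIn S q.reverse :=
  ⟨List.isChain_reverse.2 (hq.1.imp fun _ _ h => h.symm), List.nodup_reverse.2 hq.2.1,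
    fun x hx => hq.2.2 x (List.mem_reverse.1 hx)⟩

theorem exists_maximalFor_isPathIn [Finite V] {S : Finset V} (hS : S.Nonempty) :
    ∃ x q, MaximalFor (G.IsPathIn S) List.length (x :: q) := by
  have := Fintype.ofFinite V
  obtain ⟨v, hv⟩ := hS
  have hv : G.IsPathIn S [v] :=
    ⟨List.isChain_singleton v, List.nodup_singleton v, by simpa using hv⟩
  obtain ⟨p, hp⟩ := Set.Finite.exists_maximalFor List.length {q | G.IsPathIn S q}
    ((List.finite_length_le V (Fintype.card V)).subset fun q hq => hq.2.1.length_le_card)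
    ⟨_, hv⟩
  cases p with
  | nil => simpa using hp.2 hv
  | cons x q => exact ⟨x, q, hp⟩

theorem mem_of_adj_of_maximalFor_isPathIn {S : Finset V} {x u : V} {q : List V}
    (hp : MaximalFor (G.IsPathIn S) List.length (x :: q)) (hu : u ∈ S) (hux : G.Adj u x) :
    u ∈ q := by
  by_contra huq
  have hnd : (u :: x :: q).Nodup := List.nodup_cons.2 ⟨by simp [hux.ne, huq], hp.1.2.1⟩
  have := hp.2 (j := u :: x :: q)
    ⟨List.isChain_cons_cons.2 ⟨hux, hp.1.1⟩, hnd, by simpa [hu] using hp.1.2.2⟩ (by simp)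
  simp at this

-- The path `L, a, b, R` closes up into the cycle `L, a, reverse (b :: R)`.
theorem exists_cons_perm_isChain_of_crossing {L R : List V} {a b : V}
    (h : (L ++ a :: b :: R).IsChain G.Adj) (hb : ∀ x ∈ L.head?, G.Adj b x)
    (ha : ∀ y ∈ R.getLast?, G.Adj a y) {z : V} (hz : z ∈ L ++ a :: b :: R) :
    ∃ W, (z :: W).Perm (L ++ a :: b :: R) ∧ (z :: W).IsChain G.Adj := by
  have hperm : (L ++ a :: (b :: R).reverse).Perm (L ++ a :: b :: R) :=
    ((List.reverse_perm _).cons a).append_left L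
  obtain ⟨hL, hab, hLa⟩ := List.isChain_append.1 h
  have hbR : (b :: R).reverse.IsChain G.Adj :=
    List.isChain_reverse.2 ((List.isChain_cons.1 hab).2.imp fun _ _ h => h.symm)
  have haR : G.Adj a (R.getLast?.getD b) := by
    cases hR : R.getLast? with
    | none => exact (List.isChain_cons_cons.1 hab).1
    | some y => exact ha y hR
  have hC : (L ++ a :: (b :: R).reverse).IsChain G.Adj := by
    refine List.isChain_append.2 ⟨hL, List.isChain_cons.2 ⟨?_, hbR⟩, hLa⟩
    simpa [List.head?_reverse] using haR
  have hclosed : ∀ y ∈ (L ++ a :: (b :: R).reverse).getLast?,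
      ∀ x ∈ (L ++ a :: (b :: R).reverse).head?, G.Adj y x := by
    intro y hy x hx
    rw [List.reverse_cons, ← List.cons_append, ← List.append_assoc, List.getLast?_concat,
      Option.mem_some_iff] at hy
    subst hy
    cases L with
    | nil => simpa [← Option.mem_some_iff.1 hx] using (List.isChain_cons_cons.1 hab).1.symm
    | cons w L => exact hb x hx
  obtain ⟨W, hW, hWc⟩ := hC.exists_cons_perm_of_closed hclosed (hperm.mem_iff.2 hz)
  exact ⟨W, hW.trans hperm, hWc⟩

theorem exists_cons_perm_of_maximalFor_isPathIn [DecidableEq V] [DecidableRel G.Adj]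
    {S : Finset V} {x : V} {q : List V} (hp : MaximalFor (G.IsPathIn S) List.length (x :: q))
    (hdeg : (x :: q).length ≤
      #{w ∈ S | G.Adj x w} + #{w ∈ S | G.Adj ((x :: q).getLast (List.cons_ne_nil x q)) w})
    {v : V} (hv : v ∈ x :: q) : ∃ W, (v :: W).Perm (x :: q) ∧ (v :: W).IsChain G.Adj := by
  set z := (x :: q).getLast (List.cons_ne_nil x q)
  have hrev : (x :: q).reverse = z :: (x :: q).dropLast.reverse := by
    conv_lhs => rw [← List.dropLast_append_getLast (List.cons_ne_nil x q)]
    simp [z]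
  have hp' : MaximalFor (G.IsPathIn S) List.length (z :: (x :: q).dropLast.reverse) := by
    rw [← hrev]
    exact ⟨hp.1.reverse, fun r hr hle => by simpa using hp.2 hr (by simpa using hle)⟩
  have hA : ∀ b ∈ {w ∈ S | G.Adj x w}, b ∈ q := fun b hb => by
    rw [mem_filter] at hb
    exact mem_of_adj_of_maximalFor_isPathIn hp hb.1 hb.2.symm
  have hB : ∀ a ∈ {w ∈ S | G.Adj z w}, a ∈ (x :: q).dropLast := fun a ha => by
    rw [mem_filter] at ha
    exact List.mem_reverse.1 (mem_of_adj_of_maximalFor_isPathIn hp' ha.1 ha.2.symm)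
  obtain ⟨L, a, b, R, hsplit, haB, hbA⟩ :=
    List.exists_eq_append_cons_cons_of_length_le x q _ _ hA hB hdeg
  rw [hsplit] at hv ⊢
  refine exists_cons_perm_isChain_of_crossing (hsplit ▸ hp.1.1) (fun w hw => ?_)
    (fun y hy => ?_) hv
  · obtain rfl : w = x := by cases L <;> simp_all
    exact (mem_filter.1 hbA).2.symm
  · have hz : (L ++ a :: b :: R).getLast? = some z := hsplit ▸ List.getLast?_eq_some_getLast _
    obtain rfl : y = z := by
      simpa [List.getLast?_append, List.getLast?_cons, Option.mem_def.1 hy] using hz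
    exact (mem_filter.1 haB).2.symm

theorem exists_isolated_of_le_two_mul_degree [Finite V] [DecidableEq V] [DecidableRel G.Adj]
    {l : ℕ} (hpath : ∀ q : List V, q.IsChain G.Adj → q.Nodup → q.length < l) {S : Finset V}
    (hS : S.Nonempty) (hdeg : ∀ v ∈ S, l - 1 ≤ 2 * #{w ∈ S | G.Adj v w}) :
    ∃ W ⊆ S, W.Nonempty ∧ #W < l ∧ ∀ y ∈ S \ W, ∀ z ∈ W, ¬ G.Adj y z := by
  obtain ⟨x, q, hp⟩ := exists_maximalFor_isPathIn (G := G) hS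
  have hlen : (x :: q).length < l := hpath _ hp.1.1 hp.1.2.1
  set z := (x :: q).getLast (List.cons_ne_nil x q)
  have hends : (x :: q).length ≤ #{w ∈ S | G.Adj x w} + #{w ∈ S | G.Adj z w} := by
    have := hdeg x (hp.1.2.2 x List.mem_cons_self)
    have := hdeg z (hp.1.2.2 z (List.getLast_mem _))
    omega
  refine ⟨(x :: q).toFinset, fun v hv => hp.1.2.2 v (List.mem_toFinset.1 hv), ⟨x, by simp⟩,
    by rwa [List.toFinset_card_of_nodup hp.1.2.1], fun y hy v hv hyv => ?_⟩
  rw [mem_sdiff, List.mem_toFinset] at hy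
  obtain ⟨W, hW, hWc⟩ :=
    exists_cons_perm_of_maximalFor_isPathIn hp hends (List.mem_toFinset.1 hv)
  have hlonger : G.IsPathIn S (y :: v :: W) :=
    ⟨List.isChain_cons_cons.2 ⟨hyv, hWc⟩,
      List.nodup_cons.2 ⟨fun h => hy.2 (hW.mem_iff.1 h), hW.nodup_iff.2 hp.1.2.1⟩,
      fun w hw => (List.mem_cons.1 hw).elim (· ▸ hy.1) fun hw => hp.1.2.2 w (hW.mem_iff.1 hw)⟩
  have := hp.2 hlonger (by simp [← hW.length_eq])
  simp [← hW.length_eq] at this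

end Paths

theorem mul_cliqueCountIn_le [Finite V] [DecidableEq V] [DecidableRel G.Adj] {j l : ℕ}
    (hpath : ∀ q : List V, q.IsChain G.Adj → q.Nodup → q.length < l) (S : Finset V) :
    (j + 2) * G.cliqueCountIn (j + 2) S ≤ (l - (j + 2)) * G.cliqueCountIn (j + 1) S := by
  induction S using Finset.strongInduction with
  | H S ih =>
  obtain rfl | hS := S.eq_empty_or_nonempty
  · simp [cliqueCountIn, filter_singleton]
  by_cases hgood : ∃ v ∈ S, (j + 2) * G.cliqueCountIn (j + 1) {w ∈ S | G.Adj v w} ≤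
      (l - (j + 2)) * G.cliqueCountIn j {w ∈ S | G.Adj v w}
  · obtain ⟨v, hv, hgood⟩ := hgood
    rw [cliqueCountIn_succ_eq_erase_add hv, cliqueCountIn_succ_eq_erase_add hv, mul_add, mul_add]
    exact add_le_add (ih _ (erase_ssubset hv)) hgood
  push Not at hgood
  obtain ⟨W, hWS, hW, hWl, hWiso⟩ := exists_isolated_of_le_two_mul_degree hpath hS
    fun v hv => sub_one_le_two_mul_card_of_lt_mul_cliqueCountIn (hgood v hv)
  rw [cliqueCountIn_eq_add_sdiff (by omega) hWS hWiso,
    cliqueCountIn_eq_add_sdiff (by omega) hWS hWiso, mul_add, mul_add]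
  refine add_le_add ?_ (ih _ (sdiff_ssubset hWS hW))
  calc (j + 2) * G.cliqueCountIn (j + 2) W ≤ (#W - (j + 1)) * G.cliqueCountIn (j + 1) W :=
        succ_mul_cliqueCountIn_succ_le (j + 1) W
    _ ≤ _ := Nat.mul_le_mul_right _ (by omega)

end SimpleGraph

/-- If `G` has no path on `l` vertices (where `l ≥ 2`), then for every
`k` with `2 ≤ k ≤ ω(G)` one has `k·N_k(G) ≤ (l-k)·N_{k-1}(G)`. -/
theorem cliqueCount_ratio_of_no_long_path {V : Type*} [Fintype V] (G : SimpleGraph V)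
    (l : ℕ) (hl : 2 ≤ l)
    (hG : ¬ ∃ (u v : V) (p : G.Walk u v), p.IsPath ∧ p.length + 1 = l)
    (k : ℕ) (hk2 : 2 ≤ k) (hkω : k ≤ G.cliqueNum) :
    (k : ℤ) * cliqueCount G k ≤ ((l : ℤ) - k) * cliqueCount G (k - 1) := by
  classical
  have hpath := fun q => G.length_lt_of_not_exists_isPath (by omega) hG (q := q)
  obtain ⟨j, rfl⟩ : ∃ j, k = j + 2 := ⟨k - 2, by omega⟩
  have hkl : j + 2 < l := by
    obtain ⟨s, hs⟩ := G.exists_isNClique_cliqueNum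
    obtain ⟨t, hts, ht⟩ := exists_subset_card_eq (hkω.trans hs.card_eq.ge)
    exact ht ▸ (hs.isClique.subset (coe_subset.2 hts)).card_lt_of_forall_length_lt hpath
  have key := G.mul_cliqueCountIn_le hpath (j := j) univ
  rw [G.cliqueCountIn_univ, G.cliqueCountIn_univ] at key
  zify [hkl.le] at key
  simpa using key
end

section
/- There exists an integer N such that for every simple graph G on n ≥ N vertices whose adjacency-matrix spectral radius μ(G) satisfies μ(G) > sqrt(⌊n²/4⌋), the graph G contains a cycle of length t for every integer t with 3 ≤ t ≤ n/160. -/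
open Classical in
/-- `specRad G` is `μ(G)`, the largest eigenvalue of the adjacency matrix of `G`
(the supremum of the real spectrum of the adjacency matrix). -/
noncomputable def specRad {V : Type*} [Fintype V] [DecidableEq V] (G : SimpleGraph V) : ℝ :=
  sSup (spectrum ℝ (SimpleGraph.adjMatrix ℝ G))

/-!
Take an eigenvector `x` for an eigenvalue `μ > √⌊n²/4⌋` of `A(G)` and a vertex `w` maximising
`|x w|`; comparing both sides of `μ² x_w = (A² x)_w` gives `⌊n²/4⌋ < ∑_{u ∈ S} d(u)` for
`S = N(w)`. Split this sum into `P = 2 e(S)` and `Q = e(S, Sᶜ)`.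

If `P > 2t|S|`, then `S` contains a subgraph of minimum degree at least `t`, hence a path on
`t - 1` vertices, which `w` closes into a `t`-cycle.

Otherwise `P ≤ n²/80`, and since `Q ≤ |S| |Sᶜ| ≤ n²/4 < P + Q`, the pair `(S, Sᶜ)` is balanced and
misses fewer than `P` of its `|S| |Sᶜ|` edges. Discarding the vertices with more than `n/8`
non-neighbours on the other side leaves large sets `X ⊆ S`, `Y ⊆ Sᶜ` in which paths alternating
between `X` and `Y` can be grown greedily to any even length; closing them through `w` gives the
even cycles, and one edge of `G[S]` at a vertex of `X` (which exists, as otherwise all of `P` would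
sit among the few discarded vertices) adjusts the parity. These estimates hold for every `n`, so
no lower bound on `n` is needed.
-/

open Finset

theorem Finset.card_filter_not_le_mul_le_sum {ι : Type*} (s : Finset ι) (f : ι → ℕ) (β : ℕ) :
    #{i ∈ s | ¬f i ≤ β} * (β + 1) ≤ ∑ i ∈ s, f i :=
  calc #{i ∈ s | ¬f i ≤ β} * (β + 1) ≤ ∑ i ∈ s with ¬f i ≤ β, f i := by
        rw [← smul_eq_mul]
        exact card_nsmul_le_sum _ _ _ fun i hi => by simpa using (mem_filter.mp hi).2
    _ ≤ ∑ i ∈ s, f i := sum_le_sum_of_subset (filter_subset _ _)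

theorem lt_of_sq_lt_four_mul {n s r P Q M : ℕ} (hn : s + r = n) (hD : n ^ 2 < 4 * (P + Q))
    (hMQ : Q + M = s * r) : M < P := by
  subst hn
  nlinarith [four_mul_le_sq_add s r]

theorem three_mul_lt_eight_mul_of_sq_lt {n s r P Q M : ℕ} (hn : s + r = n)
    (hD : n ^ 2 < 4 * (P + Q)) (hMQ : Q + M = s * r) (hP : 80 * P ≤ n ^ 2) : 3 * n < 8 * s := by
  subst hn
  have hD' : ((s + r) ^ 2 : ℤ) < 4 * (P + Q) := by exact_mod_cast hD
  have hMQ' : (Q + M : ℤ) = s * r := by exact_mod_cast hMQ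
  have hP' : (80 * P : ℤ) ≤ (s + r) ^ 2 := by exact_mod_cast hP
  by_contra h
  have : (2 * (s + r) : ℤ) ≤ 8 * (r - s) := by omega
  nlinarith

theorem ten_mul_lt_of_mul_le {n P M b β : ℕ} (hMP : M < P) (hP : 80 * P ≤ n ^ 2)
    (hβ : n < 8 * (β + 1)) (hb : b * (β + 1) ≤ M) : 10 * b < n := by
  by_contra h
  nlinarith

theorem mul_self_lt_of_mul_le {P M b β : ℕ} (hMP : M < P) (hP : P ≤ (β + 1) * (β + 1))
    (hb : b * (β + 1) ≤ M) : b * b < P := by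
  rcases le_or_gt b (β + 1) with h | h <;> nlinarith

namespace SimpleGraph

variable {V : Type*} {G : SimpleGraph V}

theorem Walk.IsPath.exists_isCycle_of_adj {a b w : V} {p : G.Walk a b} (hp : p.IsPath)
    (hab : a ≠ b) (hw : w ∉ p.support) (ha : G.Adj w a) (hb : G.Adj w b) :
    ∃ c : G.Walk w w, c.IsCycle ∧ c.length = p.length + 2 := by
  refine ⟨.cons ha (p.concat hb.symm), ?_, by simp⟩
  rw [Walk.cons_isCycle_iff, Walk.edges_concat, List.concat_eq_append, List.mem_append,
    List.mem_singleton, Sym2.eq_iff]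
  refine ⟨hp.concat hw _, ?_⟩
  rintro (he | ⟨rfl, -⟩ | ⟨-, rfl⟩)
  · exact hw (p.fst_mem_support_of_mem_edges he)
  · exact hw p.end_mem_support
  · exact hab rfl

variable (G) [DecidableRel G.Adj]

theorem exists_adj_notMem {Y B : Finset V} {x : V} (h : #{y ∈ Y | ¬G.Adj x y} + #B < #Y) :
    ∃ y ∈ Y, G.Adj x y ∧ y ∉ B := by
  have hsplit := card_filter_add_card_filter_not (s := Y) (fun y => G.Adj x y)
  obtain ⟨y, hy, hyB⟩ := exists_mem_notMem_of_card_lt_card (s := B) (t := {y ∈ Y | G.Adj x y})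
    (by omega)
  exact ⟨y, (mem_filter.mp hy).1, (mem_filter.mp hy).2, hyB⟩

theorem sum_card_filter_adj_add_sum_card_filter_not_adj (S T : Finset V) :
    ∑ u ∈ S, #{v ∈ T | G.Adj u v} + ∑ u ∈ S, #{v ∈ T | ¬G.Adj u v} = #S * #T := by
  rw [← sum_add_distrib,
    sum_congr rfl fun u _ => card_filter_add_card_filter_not (s := T) (fun v => G.Adj u v),
    sum_const, smul_eq_mul]

theorem sum_card_filter_not_adj_comm (S T : Finset V) :
    ∑ u ∈ S, #{v ∈ T | ¬G.Adj u v} = ∑ v ∈ T, #{u ∈ S | ¬G.Adj v u} := by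
  convert sum_card_bipartiteAbove_eq_sum_card_bipartiteBelow (fun u v => ¬G.Adj u v) using 3
  <;> ext <;> simp [bipartiteAbove, bipartiteBelow, G.adj_comm]

variable [DecidableEq V]

theorem sum_card_adj_insert {U : Finset V} {a : V} (ha : a ∉ U) :
    ∑ u ∈ insert a U, #{v ∈ insert a U | G.Adj u v} =
      ∑ u ∈ U, #{v ∈ U | G.Adj u v} + 2 * #{v ∈ U | G.Adj a v} := by
  have hcard (u : V) (hu : u ∈ U) :
      #{v ∈ insert a U | G.Adj u v} = #{v ∈ U | G.Adj u v} + if G.Adj a u then 1 else 0 := by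
    rw [filter_insert]
    by_cases hau : G.Adj a u
    · rw [if_pos hau.symm, if_pos hau, card_insert_of_notMem (fun h => ha (mem_filter.mp h).1)]
    · rw [if_neg (fun h => hau h.symm), if_neg hau, add_zero]
  rw [sum_insert ha, sum_congr rfl hcard, sum_add_distrib, ← card_filter, filter_insert,
    if_neg (G.loopless.irrefl a)]
  ring

theorem exists_subset_le_card_adj (c : ℕ) (U : Finset V)
    (hU : 2 * c * #U < ∑ u ∈ U, #{v ∈ U | G.Adj u v}) :
    ∃ W ⊆ U, W.Nonempty ∧ ∀ u ∈ W, c ≤ #{v ∈ W | G.Adj u v} := by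
  induction U using Finset.strongInduction with
  | H U ih =>
    by_cases hmin : ∀ u ∈ U, c ≤ #{v ∈ U | G.Adj u v}
    · refine ⟨U, subset_rfl, nonempty_iff_ne_empty.mpr ?_, hmin⟩
      rintro rfl
      simp at hU
    push Not at hmin
    obtain ⟨a, haU, hac⟩ := hmin
    have hU' : 2 * c * #(U.erase a) < ∑ u ∈ U.erase a, #{v ∈ U.erase a | G.Adj u v} := by
      have hsum := G.sum_card_adj_insert (notMem_erase a U)
      have hcard := card_erase_add_one haU
      have hle : #{v ∈ U.erase a | G.Adj a v} ≤ #{v ∈ U | G.Adj a v} :=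
        card_le_card (filter_subset_filter _ (erase_subset a U))
      rw [insert_erase haU] at hsum
      rw [← hcard] at hU
      linarith
    obtain ⟨W, hWU, hW⟩ := ih _ (erase_ssubset haU) hU'
    exact ⟨W, hWU.trans (erase_subset a U), hW⟩

theorem exists_isPath_of_le_card_adj {c : ℕ} {W : Finset V} (hW : W.Nonempty)
    (hdeg : ∀ u ∈ W, c ≤ #{v ∈ W | G.Adj u v}) {r : ℕ} (hr : r ≤ c) :
    ∃ (a b : V) (p : G.Walk a b), p.IsPath ∧ p.length = r ∧ ∀ v ∈ p.support, v ∈ W := by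
  induction r with
  | zero =>
    obtain ⟨a, ha⟩ := hW
    exact ⟨a, a, .nil, .nil, rfl, by simpa using ha⟩
  | succ r ih =>
    obtain ⟨a, b, p, hp, hlen, hpW⟩ := ih (by omega)
    have htail : #p.support.tail.toFinset < #{v ∈ W | G.Adj a v} := by
      have := p.length_support
      have := hdeg a (hpW a p.start_mem_support)
      grind [List.toFinset_card_le, List.length_tail]
    obtain ⟨v, hv, hvp⟩ := exists_mem_notMem_of_card_lt_card htail
    rw [mem_filter] at hv
    have hvp' : v ∉ p.support := by
      rw [← p.cons_tail_support, List.mem_cons, not_or]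
      exact ⟨hv.2.ne.symm, fun h => hvp (List.mem_toFinset.mpr h)⟩
    refine ⟨v, b, .cons hv.2.symm p, hp.cons hvp', by simp [hlen], ?_⟩
    simpa [Walk.support_cons] using ⟨hv.1, hpW⟩

theorem exists_isCycle_of_lt_sum_card_adj {S : Finset V} {w : V} (hwS : ∀ u ∈ S, G.Adj w u)
    {t : ℕ} (ht : 3 ≤ t) (hS : 2 * t * #S < ∑ u ∈ S, #{v ∈ S | G.Adj u v}) :
    ∃ (v : V) (c : G.Walk v v), c.IsCycle ∧ c.length = t := by
  obtain ⟨W, hWS, hW, hdeg⟩ := G.exists_subset_le_card_adj t S hS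
  obtain ⟨a, b, p, hp, hlen, hpW⟩ := G.exists_isPath_of_le_card_adj hW hdeg (r := t - 2) (by omega)
  have hab : a ≠ b := by
    rw [Ne, ← hp.nil_iff_eq, ← Walk.length_eq_zero_iff]
    omega
  obtain ⟨c, hc, hclen⟩ := hp.exists_isCycle_of_adj hab
    (fun h => (hwS w (hWS (hpW w h))).ne rfl)
    (hwS a (hWS (hpW a p.start_mem_support))) (hwS b (hWS (hpW b p.end_mem_support)))
  exact ⟨w, c, hc, by omega⟩

theorem exists_isPath_alternating {X Y F : Finset V} {β : ℕ}
    (hX : ∀ x ∈ X, #{y ∈ Y | ¬G.Adj x y} ≤ β) (hY : ∀ y ∈ Y, #{x ∈ X | ¬G.Adj y x} ≤ β)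
    {a : V} (ha : a ∈ X) (haF : a ∉ F) (j : ℕ)
    (hXj : β + #F + 2 * j < #X) (hYj : β + #F + 2 * j < #Y) :
    ∃ x ∈ X, ∃ p : G.Walk x a, p.IsPath ∧ p.length = 2 * j ∧ ∀ v ∈ p.support, v ∉ F := by
  induction j with
  | zero => exact ⟨a, ha, .nil, .nil, rfl, by simpa using haF⟩
  | succ j ih =>
    obtain ⟨x, hx, p, hp, hlen, hpF⟩ := ih (by omega) (by omega)
    have hsupp : #p.support.toFinset ≤ 2 * j + 1 :=
      (List.toFinset_card_le _).trans (by simp [hlen])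
    obtain ⟨y, hy, hxy, hyF⟩ := G.exists_adj_notMem (x := x) (Y := Y)
      (B := F ∪ p.support.toFinset)
      (by have := card_union_le F p.support.toFinset; have := hX x hx; omega)
    set q := Walk.cons hxy.symm p
    have hq : #q.support.toFinset ≤ 2 * j + 2 :=
      (List.toFinset_card_le _).trans (by simp [q, hlen])
    obtain ⟨x₀, hx₀, hyx₀, hx₀F⟩ := G.exists_adj_notMem (x := y) (Y := X)
      (B := F ∪ q.support.toFinset)
      (by have := card_union_le F q.support.toFinset; have := hY y hy; omega)
    simp only [mem_union, List.mem_toFinset, not_or] at hyF hx₀F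
    refine ⟨x₀, hx₀, .cons hyx₀.symm q, (hp.cons hyF.2).cons hx₀F.2, by simp [q, hlen]; ring, ?_⟩
    simp only [Walk.support_cons, List.mem_cons, q]
    rintro v (rfl | rfl | hv)
    · exact hx₀F.1
    · exact hyF.1
    · exact hpF v hv

theorem exists_isCycle_of_nearly_complete_bipartite {X Y : Finset V} {β t : ℕ} {w a b : V}
    (hX : ∀ x ∈ X, #{y ∈ Y | ¬G.Adj x y} ≤ β) (hY : ∀ y ∈ Y, #{x ∈ X | ¬G.Adj y x} ≤ β)
    (hwX : ∀ x ∈ X, G.Adj w x) (ha : a ∈ X) (hab : G.Adj a b) (hwb : G.Adj w b)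
    (ht : 3 ≤ t) (hXt : β + t < #X) (hYt : β + t < #Y) :
    ∃ (v : V) (c : G.Walk v v), c.IsCycle ∧ c.length = t := by
  obtain ⟨k, rfl | rfl⟩ := Nat.even_or_odd' t
  · obtain ⟨x, hx, p, hp, hlen, hpF⟩ := G.exists_isPath_alternating hX hY ha (F := {w})
      (by simpa using (hwX a ha).ne') (k - 1) (by simp; omega) (by simp; omega)
    have hxa : x ≠ a := by
      rw [Ne, ← hp.nil_iff_eq, ← Walk.length_eq_zero_iff]
      omega
    obtain ⟨c, hc, hclen⟩ := hp.exists_isCycle_of_adj hxa (by simpa using hpF w) (hwX x hx)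
      (hwX a ha)
    exact ⟨w, c, hc, by omega⟩
  · obtain ⟨x, hx, p, hp, hlen, hpF⟩ := G.exists_isPath_alternating hX hY ha (F := {w, b})
      (by simp [(hwX a ha).ne', hab.ne]) (k - 1) (by grind [card_le_two]) (by grind [card_le_two])
    have hbp : b ∉ p.support := fun h => hpF b h (by simp)
    obtain ⟨c, hc, hclen⟩ := (hp.concat hbp hab).exists_isCycle_of_adj
      (fun h => hbp (h ▸ p.start_mem_support))
      (by simpa [Walk.support_concat, hwb.ne] using hpF w) (hwX x hx) hwb
    exact ⟨w, c, hc, by simp at hclen; omega⟩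

theorem exists_adj_of_card_mul_card_lt {S B : Finset V}
    (h : #B * #B < ∑ u ∈ S, #{v ∈ S | G.Adj u v}) : ∃ a ∈ S, a ∉ B ∧ ∃ b ∈ S, G.Adj a b := by
  by_contra! hB
  refine h.not_ge ?_
  rw [← sum_filter_add_sum_filter_not S (· ∈ B), sum_eq_zero (s := {u ∈ S | u ∉ B}) fun u hu => ?_]
  · calc ∑ u ∈ S with u ∈ B, #{v ∈ S | G.Adj u v} + 0 ≤ ∑ u ∈ S with u ∈ B, #B := by
          refine (add_zero _).le.trans (sum_le_sum fun u hu => card_le_card fun v hv => ?_)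
          rw [mem_filter] at hu hv
          by_contra hvB
          exact hB v hv.1 hvB u hu.1 hv.2.symm
      _ ≤ #B * #B := by
          rw [sum_const, smul_eq_mul]
          exact Nat.mul_le_mul_right _ (card_le_card fun u hu => (mem_filter.mp hu).2)
  · rw [mem_filter] at hu
    exact card_eq_zero.mpr (filter_eq_empty_iff.mpr fun v hv => hB u hu.1 hu.2 v hv)

variable [Fintype V]

theorem degree_eq_card_filter_adj_add (S : Finset V) (u : V) :
    G.degree u = #{v ∈ S | G.Adj u v} + #{v ∈ Sᶜ | G.Adj u v} := by
  rw [← card_union_of_disjoint (disjoint_filter_filter disjoint_compl_right), ← filter_union,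
    union_compl, ← card_neighborFinset_eq_degree, neighborFinset_eq_filter]

theorem exists_isCycle_of_sum_card_adj_le {S : Finset V} {w : V} (hwS : ∀ u ∈ S, G.Adj w u)
    {t : ℕ} (ht : 3 ≤ t) (htn : 160 * t ≤ Fintype.card V)
    (hD : Fintype.card V ^ 2 / 4 < ∑ u ∈ S, G.degree u)
    (hS : ∑ u ∈ S, #{v ∈ S | G.Adj u v} ≤ 2 * t * #S) :
    ∃ (v : V) (c : G.Walk v v), c.IsCycle ∧ c.length = t := by
  set n := Fintype.card V
  set P := ∑ u ∈ S, #{v ∈ S | G.Adj u v}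
  set Q := ∑ u ∈ S, #{v ∈ Sᶜ | G.Adj u v}
  set M := ∑ u ∈ S, #{v ∈ Sᶜ | ¬G.Adj u v}
  set β := n / 8
  have hn : #S + #Sᶜ = n := card_add_card_compl S
  have hQM : Q + M = #S * #Sᶜ := G.sum_card_filter_adj_add_sum_card_filter_not_adj S Sᶜ
  have hPQ : n ^ 2 < 4 * (P + Q) := by
    rw [Nat.div_lt_iff_lt_mul (by norm_num),
      sum_congr rfl fun u _ => G.degree_eq_card_filter_adj_add S u, sum_add_distrib] at hD
    omega
  have hMP : M < P := lt_of_sq_lt_four_mul hn hPQ hQM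
  have hP : 80 * P ≤ n ^ 2 := by nlinarith [card_le_univ S]
  have hβ : n < 8 * (β + 1) := by omega
  have hX := card_filter_add_card_filter_not (s := S) (fun u => #{v ∈ Sᶜ | ¬G.Adj u v} ≤ β)
  have hY := card_filter_add_card_filter_not (s := Sᶜ) (fun y => #{v ∈ S | ¬G.Adj y v} ≤ β)
  have hBS := card_filter_not_le_mul_le_sum S (fun u => #{v ∈ Sᶜ | ¬G.Adj u v}) β
  have hBT := G.sum_card_filter_not_adj_comm S Sᶜ ▸
    card_filter_not_le_mul_le_sum Sᶜ (fun y => #{v ∈ S | ¬G.Adj y v}) β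
  have hSbal := three_mul_lt_eight_mul_of_sq_lt hn hPQ hQM hP
  have hScbal := three_mul_lt_eight_mul_of_sq_lt ((add_comm _ _).trans hn) hPQ
    (hQM.trans (mul_comm _ _)) hP
  have hBSsmall := ten_mul_lt_of_mul_le hMP hP hβ hBS
  have hBTsmall := ten_mul_lt_of_mul_le hMP hP hβ hBT
  have hPβ : P ≤ (β + 1) * (β + 1) := by nlinarith
  obtain ⟨a, haS, haB, b, hbS, hab⟩ :=
    G.exists_adj_of_card_mul_card_lt (mul_self_lt_of_mul_le hMP hPβ hBS)
  refine G.exists_isCycle_of_nearly_complete_bipartite (β := β)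
    (X := {u ∈ S | #{v ∈ Sᶜ | ¬G.Adj u v} ≤ β}) (Y := {y ∈ Sᶜ | #{v ∈ S | ¬G.Adj y v} ≤ β})
    (fun x hx => ?_) (fun y hy => ?_) (fun x hx => hwS x (mem_filter.mp hx).1)
    (mem_filter.mpr ⟨haS, by simpa [haS] using haB⟩) hab (hwS b hbS) ht (by omega) (by omega)
  · exact (card_le_card (filter_subset_filter _ (filter_subset _ _))).trans (mem_filter.mp hx).2
  · exact (card_le_card (filter_subset_filter _ (filter_subset _ _))).trans (mem_filter.mp hy).2

theorem exists_isCycle_of_lt_sum_degree {S : Finset V} {w : V} (hwS : ∀ u ∈ S, G.Adj w u)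
    {t : ℕ} (ht : 3 ≤ t) (htn : 160 * t ≤ Fintype.card V)
    (hD : Fintype.card V ^ 2 / 4 < ∑ u ∈ S, G.degree u) :
    ∃ (v : V) (c : G.Walk v v), c.IsCycle ∧ c.length = t := by
  by_cases hdense : 2 * t * #S < ∑ u ∈ S, #{v ∈ S | G.Adj u v}
  · exact G.exists_isCycle_of_lt_sum_card_adj hwS ht hdense
  · exact G.exists_isCycle_of_sum_card_adj_le hwS ht htn hD (not_lt.mp hdense)

theorem exists_sq_le_sum_degree_of_mem_spectrum {μ : ℝ}
    (hμ : μ ∈ spectrum ℝ (G.adjMatrix ℝ)) :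
    ∃ w, μ ^ 2 ≤ ∑ u ∈ G.neighborFinset w, (G.degree u : ℝ) := by
  rw [← AlgEquiv.spectrum_eq Matrix.toLinAlgEquiv', ← Module.End.hasEigenvalue_iff_mem_spectrum]
    at hμ
  obtain ⟨x, hx⟩ := hμ.exists_hasEigenvector
  have hAx (v : V) : ∑ u ∈ G.neighborFinset v, x u = μ * x v := by
    simpa [adjMatrix_mulVec_apply] using congrFun hx.apply_eq_smul v
  obtain ⟨v₀, hv₀⟩ := Function.ne_iff.mp hx.2
  obtain ⟨w, -, hw⟩ := exists_max_image univ (fun v => |x v|) ⟨v₀, mem_univ _⟩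
  have hxw : 0 < |x w| := (abs_pos.mpr hv₀).trans_le (hw v₀ (mem_univ _))
  refine ⟨w, le_of_mul_le_mul_right ?_ hxw⟩
  calc μ ^ 2 * |x w| = |∑ u ∈ G.neighborFinset w, ∑ v ∈ G.neighborFinset u, x v| := by
        rw [sum_congr rfl fun u _ => hAx u, ← mul_sum, hAx, ← mul_assoc, abs_mul, ← sq,
          abs_of_nonneg (sq_nonneg μ)]
    _ ≤ ∑ u ∈ G.neighborFinset w, ∑ v ∈ G.neighborFinset u, |x v| :=
        (abs_sum_le_sum_abs _ _).trans (sum_le_sum fun u _ => abs_sum_le_sum_abs _ _)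
    _ ≤ ∑ u ∈ G.neighborFinset w, ∑ v ∈ G.neighborFinset u, |x w| :=
        sum_le_sum fun u _ => sum_le_sum fun v _ => hw v (mem_univ _)
    _ = (∑ u ∈ G.neighborFinset w, (G.degree u : ℝ)) * |x w| := by
        simp [sum_mul, card_neighborFinset_eq_degree]

theorem exists_lt_sum_degree_of_sqrt_lt_specRad (m : ℕ) (h : √(m : ℝ) < specRad G) :
    ∃ w, m < ∑ u ∈ G.neighborFinset w, G.degree u := by
  replace h : √(m : ℝ) < sSup (spectrum ℝ (G.adjMatrix ℝ)) := by
    unfold specRad at h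
    convert h
  have hne : (spectrum ℝ (G.adjMatrix ℝ)).Nonempty := by
    by_contra hemp
    rw [Set.not_nonempty_iff_eq_empty.mp hemp, Real.sSup_empty] at h
    exact (Real.sqrt_nonneg _).not_gt h
  obtain ⟨μ, hμ, hlt⟩ := exists_lt_of_lt_csSup hne h
  obtain ⟨w, hw⟩ := G.exists_sq_le_sum_degree_of_mem_spectrum hμ
  exact ⟨w, by exact_mod_cast (Real.lt_sq_of_sqrt_lt hlt).trans_le hw⟩

end SimpleGraph

/-- There is an `N` such that every graph on `n ≥ N` vertices whose adjacency-matrix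
spectral radius exceeds `√⌊n²/4⌋` contains a cycle of length `t` for every
`3 ≤ t ≤ n/160`. -/
theorem cycles_of_spectral_radius :
    ∃ N : ℕ, ∀ n : ℕ, N ≤ n → ∀ G : SimpleGraph (Fin n),
      Real.sqrt ((n ^ 2 / 4 : ℕ) : ℝ) < specRad G →
      ∀ t : ℕ, 3 ≤ t → (t : ℝ) ≤ (n : ℝ) / 160 →
        ∃ (v : Fin n) (c : G.Walk v v), c.IsCycle ∧ c.length = t := by
  refine ⟨0, fun n _ G hμ t ht htn => ?_⟩
  classical
  obtain ⟨w, hw⟩ := G.exists_lt_sum_degree_of_sqrt_lt_specRad _ hμ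
  refine G.exists_isCycle_of_lt_sum_degree (fun u => (G.mem_neighborFinset w u).mp) ht ?_
    (by simpa using hw)
  rw [Fintype.card_fin]
  exact_mod_cast (le_div_iff₀' (by norm_num)).mp htn
end

section
/- Let G be a simple graph on n vertices and let t ≥ 1 and s ≥ 2 be integers with n ≥ t. If G is t-degenerate (that is, its vertices can be ordered v_1, v_2, ..., v_n so that each v_i has at most t neighbors among v_{i+1}, ..., v_n), then the number of copies of K_s in G satisfies N_s(G) ≤ (n - t)·C(t, s-1) + C(t, s). -/
open Finset

namespace SimpleGraph

variable {V α : Type*} [Fintype V] (G : SimpleGraph V) [DecidableRel G.Adj] [LinearOrder α]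

def forwardNeighborFinset (f : V → α) (v : V) : Finset V :=
  {w | G.Adj v w ∧ f v < f w}

theorem coe_forwardNeighborFinset (f : V → α) (v : V) :
    (G.forwardNeighborFinset f v : Set V) = {w | G.Adj v w ∧ f v < f w} := by
  simp [forwardNeighborFinset]

theorem card_forwardNeighborFinset_le_card_Ioi [LocallyFiniteOrderTop α] {f : V → α}
    (hf : Function.Injective f) (v : V) :
    #(G.forwardNeighborFinset f v) ≤ #(Ioi (f v)) :=
  card_le_card_of_injOn f (fun w hw => by simp_all [forwardNeighborFinset]) hf.injOn

theorem cliqueFinset_succ_subset_biUnion [DecidableEq V] {f : V → α}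
    (hf : Function.Injective f) (k : ℕ) :
    G.cliqueFinset (k + 1) ⊆
      univ.biUnion fun v => ((G.forwardNeighborFinset f v).powersetCard k).image (insert v) := by
  intro K hK
  rw [mem_cliqueFinset_iff] at hK
  have hKne : K.Nonempty := by rw [← card_pos, hK.card_eq]; omega
  obtain ⟨v, hvK, hv_min⟩ := K.exists_min_image f hKne
  refine mem_biUnion.2 ⟨v, mem_univ v, mem_image.2 ⟨K.erase v, ?_, insert_erase hvK⟩⟩
  refine mem_powersetCard.2 ⟨fun w hw => ?_, by rw [card_erase_of_mem hvK, hK.card_eq]; rfl⟩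
  obtain ⟨hwv, hwK⟩ := mem_erase.1 hw
  have hlt : f v < f w := (hv_min w hwK).lt_of_ne fun h => hwv (hf h).symm
  simpa [forwardNeighborFinset, hlt] using hK.isClique hvK hwK (Ne.symm hwv)

theorem card_cliqueFinset_succ_le_sum_choose [DecidableEq V] {f : V → α}
    (hf : Function.Injective f) (k : ℕ) :
    #(G.cliqueFinset (k + 1)) ≤ ∑ v, (#(G.forwardNeighborFinset f v)).choose k :=
  calc #(G.cliqueFinset (k + 1))
      ≤ #(univ.biUnion fun v =>
          ((G.forwardNeighborFinset f v).powersetCard k).image (insert v)) :=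
        card_le_card (G.cliqueFinset_succ_subset_biUnion hf k)
    _ ≤ ∑ v, #(((G.forwardNeighborFinset f v).powersetCard k).image (insert v)) :=
        card_biUnion_le
    _ ≤ ∑ v, #((G.forwardNeighborFinset f v).powersetCard k) :=
        sum_le_sum fun _ _ => card_image_le
    _ = ∑ v, (#(G.forwardNeighborFinset f v)).choose k := by simp only [card_powersetCard]

end SimpleGraph

theorem Nat.sum_range_choose_min (t k n : ℕ) :
    ∑ j ∈ range n, (min t j).choose k = (min t n).choose (k + 1) + (n - t) * t.choose k := by
  induction n with
  | zero => simp
  | succ n ih =>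
    rw [sum_range_succ, ih]
    rcases lt_or_ge n t with h | h
    · rw [min_eq_right h.le, min_eq_right h, Nat.choose_succ_succ', Nat.sub_eq_zero_of_le h.le,
        Nat.sub_eq_zero_of_le h]
      ring
    · rw [min_eq_left h, min_eq_left (by omega), Nat.sub_add_comm h]
      ring

theorem cliqueCount_eq_card_cliqueFinset {V : Type*} [Fintype V] [DecidableEq V]
    (G : SimpleGraph V) [DecidableRel G.Adj] (j : ℕ) :
    cliqueCount G j = #(G.cliqueFinset j) := by
  rw [cliqueCount, ← Set.ncard_coe_finset, SimpleGraph.coe_cliqueFinset]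
  rfl

theorem cliqueCount_of_degenerate_general {V : Type*} [Fintype V] (G : SimpleGraph V)
    (n t s : ℕ) (hs : 2 ≤ s) (htn : t ≤ n)
    (hdegen : ∃ e : V ≃ Fin n, ∀ v : V, {w : V | G.Adj v w ∧ e v < e w}.ncard ≤ t) :
    cliqueCount G s ≤ (n - t) * Nat.choose t (s - 1) + Nat.choose t s := by
  classical
  obtain ⟨e, he⟩ := hdegen
  obtain ⟨k, rfl⟩ : ∃ k, s = k + 1 := ⟨s - 1, by omega⟩
  have hforward (v : V) : #(G.forwardNeighborFinset e v) ≤ min t (n - 1 - e v) := by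
    refine le_min ?_ ?_
    · simpa [← G.coe_forwardNeighborFinset, Set.ncard_coe_finset] using he v
    · simpa [Fin.card_Ioi] using G.card_forwardNeighborFinset_le_card_Ioi e.injective v
  calc cliqueCount G (k + 1)
      = #(G.cliqueFinset (k + 1)) := cliqueCount_eq_card_cliqueFinset G _
    _ ≤ ∑ v, (#(G.forwardNeighborFinset e v)).choose k :=
        G.card_cliqueFinset_succ_le_sum_choose e.injective k
    _ ≤ ∑ v, (min t (n - 1 - e v)).choose k :=
        sum_le_sum fun v _ => Nat.choose_le_choose k (hforward v)
    _ = ∑ i : Fin n, (min t (n - 1 - i)).choose k :=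
        e.sum_comp fun i : Fin n => (min t (n - 1 - i)).choose k
    _ = ∑ j ∈ range n, (min t (n - 1 - j)).choose k :=
        Fin.sum_univ_eq_sum_range (fun j => (min t (n - 1 - j)).choose k) n
    _ = ∑ j ∈ range n, (min t j).choose k := sum_range_reflect (fun j => (min t j).choose k) n
    _ = (n - t) * t.choose (k + 1 - 1) + t.choose (k + 1) := by
        rw [Nat.sum_range_choose_min, min_eq_left htn, Nat.add_sub_cancel, add_comm]

/-- If `G` on `n ≥ t` vertices is `t`-degenerate (its vertices can be ordered so that
each vertex has at most `t` neighbors among the later vertices), then for `s ≥ 2`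
the number of copies of `K_s` satisfies `N_s(G) ≤ (n-t)·C(t, s-1) + C(t, s)`. -/
theorem cliqueCount_of_degenerate {V : Type*} [Fintype V] (G : SimpleGraph V)
    (n t s : ℕ) (hn : Fintype.card V = n) (ht : 1 ≤ t) (hs : 2 ≤ s) (htn : t ≤ n)
    (hdegen : ∃ e : V ≃ Fin n, ∀ v : V, {w : V | G.Adj v w ∧ e v < e w}.ncard ≤ t) :
    cliqueCount G s ≤ (n - t) * Nat.choose t (s - 1) + Nat.choose t s :=
  cliqueCount_of_degenerate_general G n t s hs htn hdegen
end

section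
/- Let n ≥ c ≥ 5 and s ≥ 2 be integers, and let k and x be integers with 2 ≤ k ≤ x ≤ ⌊(c-1)/2⌋. Then f_s(n,x,c) ≤ max{ f_s(n,k,c), f_s(n,⌊(c-1)/2⌋,c) }; that is, on the integer interval [k, ⌊(c-1)/2⌋] the function x ↦ f_s(n,x,c) attains its maximum at an endpoint. -/
/-- `f s n k c = f_s(n,k,c) = C(c-k, s) + (n-(c-k))·C(k, s-1)`, the number of copies of
`K_s` in the graph `H(n,k,c)`. -/
def f (s n k c : ℕ) : ℕ :=
  Nat.choose (c - k) s + (n - (c - k)) * Nat.choose k (s - 1)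

/-- For `n ≥ c ≥ 5`, `s ≥ 2` and `2 ≤ k ≤ x ≤ ⌊(c-1)/2⌋`, the function `x ↦ f_s(n,x,c)`
is bounded on `[k, ⌊(c-1)/2⌋]` by its values at the endpoints:
`f_s(n,x,c) ≤ max{f_s(n,k,c), f_s(n,⌊(c-1)/2⌋,c)}`. -/
theorem f_le_max_endpoints (n c s k x : ℕ) (hc : 5 ≤ c) (hn : c ≤ n) (hs : 2 ≤ s)
    (hk : 2 ≤ k) (hkx : k ≤ x) (hx : x ≤ (c - 1) / 2) :
    f s n x c ≤ max (f s n k c) (f s n ((c - 1) / 2) c) := by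
  set M := (c - 1) / 2 with hM
  have hMc : M < c := lt_of_le_of_lt (Nat.div_le_self _ _) (by omega)
  set D : ℕ → ℕ := fun j => (n - c + j) * Nat.choose j (s - 2) + Nat.choose (j + 1) (s - 1)
    with hD
  set E : ℕ → ℕ := fun j => Nat.choose (c - (j + 1)) (s - 1) with hE
  -- key identity: f (j+1) + E j = f j + D j
  have key : ∀ j, j + 1 ≤ M → f s n (j + 1) c + E j = f s n j c + D j := by
    intro j hj
    have hjc : j + 1 < c := by omega
    have h1 : c - j = (c - (j + 1)) + 1 := by omega
    have h2 : Nat.choose (c - j) s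
        = Nat.choose (c - (j + 1)) (s - 1) + Nat.choose (c - (j + 1)) s := by
      have hs' : s = (s - 1) + 1 := by omega
      rw [h1]
      conv_lhs => rw [hs']
      rw [Nat.choose_succ_succ]
      have hss : (s - 1).succ = s := by omega
      rw [hss]
    have h3 : Nat.choose (j + 1) (s - 1)
        = Nat.choose j (s - 2) + Nat.choose j (s - 1) := by
      have hs' : s - 1 = (s - 2) + 1 := by omega
      rw [hs', Nat.choose_succ_succ]
    have h4 : n - (c - (j + 1)) = (n - (c - j)) + 1 := by omega
    have h5 : n - c + j = n - (c - j) := by omega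
    simp only [f, hE, hD, h2, h3, h4, h5]
    ring
  have Dmono : ∀ i j : ℕ, i ≤ j → D i ≤ D j := by
    intro i j hij
    apply Nat.add_le_add
    · exact Nat.mul_le_mul (by omega) (Nat.choose_le_choose _ hij)
    · exact Nat.choose_le_choose _ (by omega)
  have Eanti : ∀ i j : ℕ, i ≤ j → E j ≤ E i := by
    intro i j hij
    exact Nat.choose_le_choose _ (by omega)
  by_cases hxk : f s n x c ≤ f s n k c
  · exact le_max_of_le_left hxk
  · push_neg at hxk
    -- there is j ∈ [k, x) with f j < f (j+1)
    have exj : ∀ y, k ≤ y → f s n k c < f s n y c →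
        ∃ j, k ≤ j ∧ j + 1 ≤ y ∧ f s n j c < f s n (j + 1) c := by
      intro y hy
      induction y, hy using Nat.le_induction with
      | base => intro h; omega
      | succ m hm ih =>
        intro h
        by_cases hlt : f s n m c < f s n (m + 1) c
        · exact ⟨m, hm, le_refl _, hlt⟩
        · push_neg at hlt
          obtain ⟨j, hj1, hj2, hj3⟩ := ih (lt_of_lt_of_le h hlt)
          exact ⟨j, hj1, by omega, hj3⟩
    obtain ⟨j, hjk, hjx, hjlt⟩ := exj x hkx hxk
    have hjM : j + 1 ≤ M := le_trans hjx hx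
    have hDE : E j < D j := by
      have := key j hjM
      omega
    -- f is nondecreasing from x up to M
    have mono : ∀ y, x ≤ y → y ≤ M → f s n x c ≤ f s n y c := by
      intro y hy
      induction y, hy using Nat.le_induction with
      | base => intro _; exact le_refl _
      | succ m hm ih =>
        intro hmM
        have step : f s n m c ≤ f s n (m + 1) c := by
          have hkey := key m (by omega)
          have h1 : D j ≤ D m := Dmono j m (by omega)
          have h2 : E m ≤ E j := Eanti j m (by omega)
          omega
        exact le_trans (ih (by omega)) step
    exact le_max_of_le_right (mono M hx (le_refl _))
end
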